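/- arXiv:2408.13558 — 4 statements merged into one kernel-verified Lean document; each statement's English description precedes it below -/
import Mathlib

section
/- Let A be a finite abelian group and let G = A ⋊₋₁ C₂ be the generalized dihedral group over A, i.e. the semidirect product of A with the cyclic group of order 2 in which the nontrivial element of C₂ acts on A by inversion. Then the ordered Davenport constant of G equals d(A) + 2, where d(A) is the small Davenport constant of A. Concretely: (i) every list of elements of G of length at least d(A) + 2 has a nonempty order-preserving (not necessarily contiguous) sublist whose product, taken in the given order, equals the identity; and (ii) there exists a list of elements of G of length d(A) + 1 with no such nonempty sublist. -/
/-- A list (ordered sequence) over `G` is product-one free if no nonempty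
order-preserving sublist has product equal to the identity. -/
def OrderedProductOneFree {G : Type*} [Group G] (l : List G) : Prop :=
  ∀ t : List G, t.Sublist l → t ≠ [] → t.prod ≠ 1

/-- The ordered Davenport constant: the smallest `k` such that every list of
elements of `G` of length at least `k` has a nonempty sublist with product one. -/
noncomputable def orderedDavenport (G : Type*) [Group G] : ℕ :=
  sInf {k : ℕ | ∀ l : List G, k ≤ l.length → ¬ OrderedProductOneFree l}
/-- A multiset (sequence) over `G` is product-one free if no nonempty submultiset
admits an ordering of its terms whose product is the identity. -/
def ProductOneFreeM {G : Type*} [Group G] (s : Multiset G) : Prop :=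
  ∀ t : Multiset G, t ≤ s → t ≠ 0 → ∀ l : List G, (l : Multiset G) = t → l.prod ≠ 1

/-- The small Davenport constant: the maximal cardinality of a product-one free
multiset over `G`. -/
noncomputable def smallDavenport (G : Type*) [Group G] : ℕ :=
  sSup {n : ℕ | ∃ s : Multiset G, ProductOneFreeM s ∧ Multiset.card s = n}
/-- The action of `C₂ = Multiplicative (ZMod 2)` on a commutative group `A` in which the
nontrivial element acts by the inversion automorphism `x ↦ x⁻¹`. -/
noncomputable def invActionHom (A : Type*) [CommGroup A] :
    Multiplicative (ZMod 2) →* MulAut A :=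
  AddMonoidHom.toMultiplicativeLeft
    (ZMod.lift 2 ⟨zmultiplesHom (Additive (MulAut A)) (Additive.ofMul (MulEquiv.inv A)), by
      show (2 : ℤ) • Additive.ofMul (MulEquiv.inv A) = 0
      have h : (MulEquiv.inv A) ^ (2 : ℤ) = 1 := by
        ext x
        simp [zpow_two, pow_two, MulAut.mul_apply]
      rw [show ((2 : ℤ) • Additive.ofMul (MulEquiv.inv A)) =
            Additive.ofMul ((MulEquiv.inv A) ^ (2 : ℤ)) from rfl, h]
      rfl⟩)


/-!
Call `inl a` a rotation and every other element of `G = A ⋊₋₁ C₂` a reflection. From a list `l`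
over `G` build a list `M` over `A`: keep each rotation `a`, and for each reflection `y` followed,
after a run `Z` of rotations, by another reflection `g`, add the `b` with `inl b = y · Z · g`; so
`|M| ≥ |l| - 1`. The product of every subsequence of `M` is that of a sublist of `l`: a chosen `b`
contributes `y` and `g` (two consecutive chosen `b`'s cancel their common reflection), and the
rotations of `Z`, which then lie between two chosen reflections and so enter inverted, are taken
exactly when they are not chosen individually. Hence `|l| ≥ d(A) + 2` gives a product-one
sublist, while an extremal product-one free sequence over `A` followed by a single reflection is
product-one free in `G`.
-/

open List SemidirectProduct

theorem List.Sublist.exists_sublist_prod_mul_prod_eq {M : Type*} [CommMonoid M] {W Z : List M}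
    (h : W <+ Z) : ∃ C, C <+ Z ∧ C.prod * W.prod = Z.prod := by
  classical
  refine ⟨Z.diff W, diff_sublist Z W, ?_⟩
  rw [mul_comm, ← prod_append]
  exact (subperm_append_diff_self_of_count_le fun x _ => h.subperm.count_le x).prod_eq

theorem List.Sublist.exists_of_sublist_cons_append {α : Type*} {b : α} {Z M N : List α}
    (h : N <+ b :: (Z ++ M)) : ∃ W N', W <+ Z ∧ N' <+ M ∧ (N = W ++ N' ∨ N = b :: (W ++ N')) := by
  rcases sublist_cons_iff.1 h with hN | ⟨N₁, rfl, hN₁⟩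
  · obtain ⟨W, N', rfl, hW, hN'⟩ := sublist_append_iff.1 hN
    exact ⟨W, N', hW, hN', .inl rfl⟩
  · obtain ⟨W, N', rfl, hW, hN'⟩ := sublist_append_iff.1 hN₁
    exact ⟨W, N', hW, hN', .inr rfl⟩

theorem exists_sublist_prod_eq_one_of_card_le {G : Type*} [Group G] [Finite G] {L : List G}
    (h : Nat.card G ≤ L.length) : ∃ t, t <+ L ∧ t ≠ [] ∧ t.prod = 1 := by
  have := Fintype.ofFinite G
  obtain ⟨i, j, hij, heq⟩ := Fintype.exists_ne_map_eq_of_card_lt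
    (fun i : Fin (L.length + 1) => (L.take i).prod)
    (by rw [Fintype.card_fin, ← Nat.card_eq_fintype_card]; omega)
  wlog hlt : i < j generalizing i j
  · exact this j i hij.symm heq.symm (lt_of_le_of_ne (not_lt.1 hlt) hij.symm)
  have hsplit : L.take j = L.take i ++ (L.take j).drop i := by
    conv_lhs => rw [← take_append_drop i (L.take j)]
    rw [take_take, min_eq_left (Fin.le_iff_val_le_val.1 hlt.le)]
  refine ⟨(L.take j).drop i, (drop_sublist _ _).trans (take_sublist _ _), ?_, ?_⟩
  · have hj : (j : ℕ) ≤ L.length := Nat.lt_succ_iff.1 j.isLt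
    rw [← length_pos_iff, length_drop, length_take]
    have : (i : ℕ) < j := hlt
    omega
  · rw [hsplit, prod_append] at heq
    exact mul_eq_left.1 heq.symm

section ProductOneFree

variable {A : Type*} [CommGroup A]

theorem productOneFreeM_coe_iff {L : List A} :
    ProductOneFreeM (L : Multiset A) ↔ ∀ N, N <+ L → N ≠ [] → N.prod ≠ 1 := by
  refine ⟨fun h N hN hne => h N (Multiset.coe_le.2 hN.subperm) (by simpa using hne) N rfl, ?_⟩
  rintro h t ht hne l rfl
  obtain ⟨N, hperm, hN⟩ := Multiset.coe_le.1 ht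
  rw [← hperm.prod_eq]
  exact h N hN (by rintro rfl; simp_all)

variable [Finite A]

theorem ProductOneFreeM.card_le {s : Multiset A} (h : ProductOneFreeM s) :
    Multiset.card s ≤ Nat.card A := by
  rw [← Multiset.coe_toList s, productOneFreeM_coe_iff] at h
  by_contra! hlt
  obtain ⟨t, ht, hne, hprod⟩ :=
    exists_sublist_prod_eq_one_of_card_le (L := s.toList) (by simpa using hlt.le)
  exact h t ht hne hprod

theorem bddAbove_card_productOneFreeM :
    BddAbove {n : ℕ | ∃ s : Multiset A, ProductOneFreeM s ∧ Multiset.card s = n} := by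
  refine ⟨Nat.card A, ?_⟩
  rintro n ⟨s, hs, rfl⟩
  exact hs.card_le

theorem exists_sublist_prod_eq_one_of_smallDavenport_lt {L : List A}
    (h : smallDavenport A < L.length) : ∃ N, N <+ L ∧ N ≠ [] ∧ N.prod = 1 := by
  by_contra! hfree
  have : Multiset.card (L : Multiset A) ≤ smallDavenport A :=
    le_csSup bddAbove_card_productOneFreeM ⟨L, productOneFreeM_coe_iff.2 hfree, rfl⟩
  simp only [Multiset.coe_card] at this
  omega

theorem exists_productOneFree_list_length_eq_smallDavenport :
    ∃ L : List A, L.length = smallDavenport A ∧ ∀ N, N <+ L → N ≠ [] → N.prod ≠ 1 := by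
  have hzero : ProductOneFreeM (0 : Multiset A) := fun t ht hne =>
    absurd (Multiset.le_zero.1 ht) hne
  obtain ⟨s, hs, hcard⟩ :=
    Nat.sSup_mem (by exact ⟨0, 0, hzero, rfl⟩) (bddAbove_card_productOneFreeM (A := A))
  rw [← Multiset.coe_toList s, productOneFreeM_coe_iff] at hs
  exact ⟨s.toList, by simpa [smallDavenport] using hcard, hs⟩

end ProductOneFree

abbrev GeneralizedDihedral (A : Type*) [CommGroup A] :=
  A ⋊[invActionHom A] Multiplicative (ZMod 2)

namespace GeneralizedDihedral

variable {A : Type*} [CommGroup A]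

theorem invActionHom_apply_of_ne_one {s : Multiplicative (ZMod 2)} (hs : s ≠ 1) (a : A) :
    invActionHom A s a = a⁻¹ := by
  obtain rfl : s = Multiplicative.ofAdd 1 := by revert s; decide
  rfl

theorem inl_left {g : GeneralizedDihedral A} (hg : g.right = 1) : inl g.left = g := by
  ext <;> simp [hg]

theorem right_mul_eq_one {r s : GeneralizedDihedral A} (hr : r.right ≠ 1) (hs : s.right ≠ 1) :
    (r * s).right = 1 := by
  rw [mul_right]
  revert hr hs
  generalize r.right = x
  generalize s.right = y
  revert x y
  decide

theorem mul_self_of_right_ne_one {r : GeneralizedDihedral A} (hr : r.right ≠ 1) : r * r = 1 := by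
  ext
  · simp [invActionHom_apply_of_ne_one hr]
  · exact right_mul_eq_one hr hr

theorem mul_inl_of_right_ne_one {r : GeneralizedDihedral A} (hr : r.right ≠ 1) (a : A) :
    r * inl a = inl a⁻¹ * r := by
  ext
  · simp [invActionHom_apply_of_ne_one hr, mul_comm]
  · simp

theorem inl_mul_mul_inl_of_right_ne_one {g : GeneralizedDihedral A} (hg : g.right ≠ 1) (c w : A) :
    inl (c * w) * g * inl w = inl c * g := by
  rw [mul_assoc, mul_inl_of_right_ne_one hg, map_mul, map_inv]
  group

def Realizes (l : List (GeneralizedDihedral A)) (M : List A) : Prop :=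
  ∀ N, N <+ M → ∃ t, t <+ l ∧ t.prod = inl N.prod ∧ (N ≠ [] → t ≠ [])

-- `Realizes` alone does not survive the induction: realizing a chosen `b` needs the sublists
-- after `y` whose product is `g * inl N`.
def RealizesMul (y : GeneralizedDihedral A) (l : List (GeneralizedDihedral A)) (M : List A) :
    Prop :=
  ∀ N, N <+ M → ∃ t, t <+ l ∧ t.prod = y * inl N.prod

theorem Realizes.cons_inl {l : List (GeneralizedDihedral A)} {M : List A} (h : Realizes l M)
    (a : A) : Realizes (inl a :: l) (a :: M) := by
  intro N hN
  rcases sublist_cons_iff.1 hN with hN | ⟨N', rfl, hN'⟩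
  · obtain ⟨t, ht, hprod, hne⟩ := h N hN
    exact ⟨t, ht.cons _, hprod, hne⟩
  · obtain ⟨t, ht, hprod, -⟩ := h N' hN'
    exact ⟨inl a :: t, ht.cons_cons _, by simp [hprod], fun _ => cons_ne_nil _ _⟩

theorem inl_left_mul_inl_mul {y g : GeneralizedDihedral A} (hy : y.right ≠ 1) (hg : g.right ≠ 1)
    (c : A) : inl (y * inl c * g).left = y * inl c * g :=
  inl_left (by simpa using right_mul_eq_one hy hg)

theorem realizes_block {y g : GeneralizedDihedral A} (hy : y.right ≠ 1) (hg : g.right ≠ 1)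
    (Zs : List A) {l : List (GeneralizedDihedral A)} {M : List A} (hM : Realizes (g :: l) M)
    (hM' : RealizesMul g (g :: l) M) :
    Realizes (y :: (Zs.map inl ++ g :: l)) ((y * inl Zs.prod * g).left :: (Zs ++ M)) := by
  intro N hN
  obtain ⟨W, N', hW, hN', rfl | rfl⟩ := hN.exists_of_sublist_cons_append
  · obtain ⟨t, ht, hprod, hne⟩ := hM N' hN'
    refine ⟨W.map inl ++ t, ((hW.map _).append ht).cons _, ?_, ?_⟩
    · simp [hprod, ← map_list_prod]
    · simp only [ne_eq, append_eq_nil_iff, map_eq_nil_iff, not_and] at hne ⊢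
      tauto
  · obtain ⟨C, hC, hCW⟩ := hW.exists_sublist_prod_mul_prod_eq
    obtain ⟨t, ht, hprod⟩ := hM' N' hN'
    refine ⟨y :: (C.map inl ++ t), ((hC.map _).append ht).cons_cons _, ?_,
      fun _ => cons_ne_nil _ _⟩
    calc (y :: (C.map inl ++ t)).prod
        = y * (inl (C.prod * W.prod) * g * inl W.prod) * inl N'.prod := by
          rw [inl_mul_mul_inl_of_right_ne_one hg]
          simp [hprod, ← map_list_prod, mul_assoc]
      _ = _ := by
          rw [prod_cons, prod_append, map_mul, map_mul, inl_left_mul_inl_mul hy hg, ← hCW]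
          simp only [map_mul, mul_assoc]

theorem realizesMul_block {y g : GeneralizedDihedral A} (hy : y.right ≠ 1) (hg : g.right ≠ 1)
    (Zs : List A) {l : List (GeneralizedDihedral A)} {M : List A} (hM : Realizes (g :: l) M)
    (hM' : RealizesMul g (g :: l) M) :
    RealizesMul y (y :: (Zs.map inl ++ g :: l)) ((y * inl Zs.prod * g).left :: (Zs ++ M)) := by
  intro N hN
  obtain ⟨W, N', hW, hN', rfl | rfl⟩ := hN.exists_of_sublist_cons_append
  · obtain ⟨t, ht, hprod, -⟩ := hM N' hN'
    refine ⟨y :: (W.map inl ++ t), ((hW.map _).append ht).cons_cons _, ?_⟩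
    simp [hprod, ← map_list_prod]
  · obtain ⟨C, hC, hCW⟩ := hW.exists_sublist_prod_mul_prod_eq
    obtain ⟨t, ht, hprod⟩ := hM' N' hN'
    refine ⟨C.map inl ++ t, ((hC.map _).append ht).cons _, ?_⟩
    calc (C.map inl ++ t).prod
        = y * y * (inl (C.prod * W.prod) * g * inl W.prod) * inl N'.prod := by
          rw [mul_self_of_right_ne_one hy, inl_mul_mul_inl_of_right_ne_one hg]
          simp [hprod, ← map_list_prod, mul_assoc]
      _ = _ := by
          rw [prod_cons, prod_append, map_mul, map_mul, inl_left_mul_inl_mul hy hg, ← hCW]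
          simp only [map_mul, mul_assoc]

theorem exists_realizes_cons_of_right_ne_one (l : List (GeneralizedDihedral A))
    {y : GeneralizedDihedral A} (hy : y.right ≠ 1) (Zs : List A) :
    ∃ M : List A, Zs.length + l.length ≤ M.length ∧
      Realizes (y :: (Zs.map inl ++ l)) M ∧ RealizesMul y (y :: (Zs.map inl ++ l)) M := by
  induction l generalizing y Zs with
  | nil =>
    refine ⟨Zs, by simp, fun N hN => ⟨N.map inl, ?_, ?_, ?_⟩, fun N hN => ⟨y :: N.map inl, ?_, ?_⟩⟩
    · simpa using (hN.map _).cons y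
    · simp [← map_list_prod]
    · simp
    · simpa using (hN.map _).cons_cons y
    · simp [← map_list_prod]
  | cons g l ih =>
    by_cases hg : g.right = 1
    · obtain ⟨M, hlen, hM⟩ := ih hy (Zs ++ [g.left])
      refine ⟨M, by simp only [length_append, length_cons] at hlen ⊢; omega, ?_⟩
      simpa [inl_left hg] using hM
    · obtain ⟨M, hlen, hM, hM'⟩ := ih hg []
      simp only [map_nil, nil_append] at hM hM'
      exact ⟨_, by simp only [length_cons, length_append] at hlen ⊢; omega,
        realizes_block hy hg Zs hM hM', realizesMul_block hy hg Zs hM hM'⟩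

theorem exists_realizes (l : List (GeneralizedDihedral A)) :
    ∃ M : List A, l.length ≤ M.length + 1 ∧ Realizes l M := by
  induction l with
  | nil =>
    refine ⟨[], by simp, fun N hN => ⟨[], .slnil, ?_⟩⟩
    simp [sublist_nil.1 hN]
  | cons g l ih =>
    by_cases hg : g.right = 1
    · obtain ⟨M, hlen, hM⟩ := ih
      refine ⟨g.left :: M, by simp only [length_cons]; omega, ?_⟩
      simpa [inl_left hg] using hM.cons_inl g.left
    · obtain ⟨M, hlen, hM, -⟩ := exists_realizes_cons_of_right_ne_one l hg []
      refine ⟨M, by simp only [length_nil, length_cons] at hlen ⊢; omega, by simpa using hM⟩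

theorem not_orderedProductOneFree_of_smallDavenport_add_two_le [Finite A]
    {l : List (GeneralizedDihedral A)} (h : smallDavenport A + 2 ≤ l.length) :
    ¬ OrderedProductOneFree l := by
  obtain ⟨M, hlen, hM⟩ := exists_realizes l
  obtain ⟨N, hN, hne, hprod⟩ := exists_sublist_prod_eq_one_of_smallDavenport_lt (L := M) (by omega)
  obtain ⟨t, ht, htprod, htne⟩ := hM N hN
  exact fun hfree => hfree t ht (htne hne) (by rw [htprod, hprod, map_one])

theorem orderedProductOneFree_map_inl_append_singleton {L : List A}
    (hL : ∀ N, N <+ L → N ≠ [] → N.prod ≠ 1) {r : GeneralizedDihedral A} (hr : r.right ≠ 1) :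
    OrderedProductOneFree (L.map inl ++ [r]) := by
  intro t ht hne hprod
  obtain ⟨t₁, t₂, rfl, ht₁, ht₂⟩ := sublist_append_iff.1 ht
  obtain ⟨N, hN, rfl⟩ := sublist_map_iff.1 ht₁
  rcases sublist_singleton.1 ht₂ with rfl | rfl
  · have hinl : inl N.prod = (1 : GeneralizedDihedral A) := by
      simpa [← map_list_prod] using hprod
    exact hL N hN (by simpa using hne) (inl_injective (hinl.trans (map_one _).symm))
  · apply hr
    simpa [← map_list_prod] using congrArg (rightHom : GeneralizedDihedral A →* _) hprod

end GeneralizedDihedral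

/-- For a finite abelian group `A` and `G = A ⋊₋₁ C₂` (the generalized
dihedral group, the nontrivial element of `C₂` acting by inversion), the ordered Davenport
constant of `G` equals `d(A) + 2`: (i) every list over `G` of length at least `d(A) + 2`
has a nonempty sublist with product one, and (ii) there is a product-one free list of
length `d(A) + 1`. -/
theorem orderedDavenport_generalizedDihedral (A : Type*) [CommGroup A] [Finite A] :
    (∀ l : List (A ⋊[invActionHom A] Multiplicative (ZMod 2)),
        smallDavenport A + 2 ≤ l.length → ¬ OrderedProductOneFree l) ∧
    (∃ l : List (A ⋊[invActionHom A] Multiplicative (ZMod 2)),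
        l.length = smallDavenport A + 1 ∧ OrderedProductOneFree l) := by
  refine ⟨fun l => GeneralizedDihedral.not_orderedProductOneFree_of_smallDavenport_add_two_le, ?_⟩
  obtain ⟨L, hlen, hL⟩ := exists_productOneFree_list_length_eq_smallDavenport (A := A)
  exact ⟨L.map inl ++ [⟨1, Multiplicative.ofAdd 1⟩], by simp [hlen],
    GeneralizedDihedral.orderedProductOneFree_map_inl_append_singleton hL (by simp)⟩
end

section
/- Let α ≥ β ≥ γ ≥ 1 be integers and let G be a finite group of order 2^(α+β+γ) together with elements a, b, c such that G is generated by {a, b, c}, the commutator [a,b] = a⁻¹b⁻¹ab equals c, c commutes with both a and b, orderOf a = 2^α, orderOf b = 2^β, orderOf c = 2^γ, the cyclic subgroups ⟨a⟩ and ⟨c⟩ intersect trivially, and the subgroups ⟨a, c⟩ and ⟨b⟩ intersect trivially (this is the group G₁ = (⟨c⟩ × ⟨a⟩) ⋊ ⟨b⟩). Then the Loewy length of G satisfies L(G) = 2^α + 2^β + 2^(γ+1) − 3. -/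
/-- The Loewy length of a finite `p`-group `G`: the least positive integer `n` such that
the `n`-th power of the Jacobson radical of the group algebra `𝔽_p[G]` vanishes. -/
noncomputable def loewyLength (p : ℕ) (G : Type*) [Group G] : ℕ :=
  sInf {n : ℕ | 0 < n ∧ (Ideal.jacobson (⊥ : Ideal (MonoidAlgebra (ZMod p) G))) ^ n = ⊥}

/-!
Write `x = a - 1`, `y = b - 1`, `z = c - 1` in `𝔽₂[G]`. The Jacobson radical is the augmentation
ideal `I`: it is maximal and nilpotent. Since `c` is central in `⟨a, b⟩` and `ab = cba`, we have
`yx = xy - z(yx + y + x + 1)`. Give `x` and `y` weight one and `z` weight two, and let `W n` be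
spanned by the monomials `z^k x^i y^j` of weight at least `n`. Right multiplication by `g - 1`
maps `W n` into `W (n + 1)` for `g = a, b, c`, hence for every `g`, so `I^n ⊆ W n`. In
characteristic two `x^(2^α) = y^(2^β) = z^(2^γ) = 0`, so `W n = 0` beyond the top weight
`N = 2(2^γ - 1) + (2^α - 1) + (2^β - 1)`. Conversely `z ∈ I²`, so the top monomial lies in `I^N`;
it is the sum of all `c^k a^i b^j` over the box `k < 2^γ, i < 2^α, j < 2^β`, which is nonzero
because these normal forms are pairwise distinct.
-/

open Finset

section CharPow

open Polynomial

variable {p : ℕ} [Fact p.Prime]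

theorem Polynomial.X_sub_one_pow_char_pow (m : ℕ) :
    (X - 1 : (ZMod p)[X]) ^ p ^ m = X ^ p ^ m - 1 := by
  simpa using sub_pow_char_pow_of_commute p m (Commute.one_right (X : (ZMod p)[X]))

theorem Polynomial.X_sub_one_pow_char_pow_sub_one (m : ℕ) :
    (X - 1 : (ZMod p)[X]) ^ (p ^ m - 1) = ∑ i ∈ range (p ^ m), X ^ i := by
  refine mul_left_cancel₀ (X_sub_C_ne_zero 1) ?_
  rw [← C_1, ← pow_succ', Nat.sub_add_cancel (Nat.one_le_pow _ _ (Fact.out : p.Prime).pos), C_1,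
    X_sub_one_pow_char_pow, mul_geom_sum]

variable {R : Type*} [Ring R] [Algebra (ZMod p) R]

theorem sub_one_pow_char_pow (u : R) (m : ℕ) : (u - 1) ^ p ^ m = u ^ p ^ m - 1 := by
  simpa using congr_arg (aeval u) (X_sub_one_pow_char_pow (p := p) m)

theorem sub_one_pow_char_pow_sub_one (u : R) (m : ℕ) :
    (u - 1) ^ (p ^ m - 1) = ∑ i ∈ range (p ^ m), u ^ i := by
  simpa using congr_arg (aeval u) (X_sub_one_pow_char_pow_sub_one (p := p) m)

end CharPow

theorem Ideal.jacobson_bot_eq_of_isMaximal_of_pow_eq_bot {R : Type*} [Ring R] {I : Ideal R}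
    [I.IsMaximal] {N : ℕ} (hN : I ^ N = ⊥) : Ideal.jacobson ⊥ = I := by
  refine le_antisymm (sInf_le ⟨bot_le, ‹_›⟩) fun x hx => Ideal.mem_jacobson_iff.2 fun y => ?_
  have hyx : IsNilpotent (y * x) :=
    ⟨N, by simpa [hN] using Ideal.pow_mem_pow (I.mul_mem_left y hx) N⟩
  obtain ⟨u, hu⟩ := hyx.isUnit_add_one
  exact ⟨↑u⁻¹, by simp [mul_assoc, ← mul_add_one, ← hu]⟩

theorem Ideal.pow_mul_pow_mul_pow_mem {R : Type*} [Semiring R] {I : Ideal R} [I.IsTwoSided]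
    {x y z : R} (hx : x ∈ I) (hy : y ∈ I) (hz : z ∈ I ^ 2) (k i j : ℕ) :
    z ^ k * x ^ i * y ^ j ∈ I ^ (2 * k + i + j) := by
  have mul_mem_pow_add : ∀ {u v : R} {m n : ℕ}, u ∈ I ^ m → v ∈ I ^ n → u * v ∈ I ^ (m + n) :=
    fun hu hv => by rw [IsTwoSided.pow_add]; exact mul_mem_mul hu hv
  have hzk : ∀ k, z ^ k ∈ I ^ (2 * k) := by
    intro k
    induction k with
    | zero => simp [Submodule.pow_zero, one_eq_top]
    | succ k ih => rw [pow_succ, mul_add_one]; exact mul_mem_pow_add ih hz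
  exact mul_mem_pow_add (mul_mem_pow_add (hzk k) (pow_mem_pow hx i)) (pow_mem_pow hy j)

theorem sub_one_mul_sub_one_eq_of_mul_eq {R : Type*} [Ring R] {A B C : R}
    (h : A * B = C * (B * A)) :
    (B - 1) * (A - 1) =
      (A - 1) * (B - 1) - (C - 1) * ((B - 1) * (A - 1) + (B - 1) + (A - 1) + 1) := by
  rw [← sub_eq_zero, ← sub_eq_zero.2 h.symm]
  noncomm_ring

theorem eq_zero_of_pow_mul_pow_mul_pow_eq_one {G : Type*} [Group G] {a b c : G}
    (hac : Subgroup.zpowers a ⊓ Subgroup.zpowers c = ⊥)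
    (hacb : Subgroup.closure {a, c} ⊓ Subgroup.zpowers b = ⊥) {l i j : ℕ} (hl : l < orderOf c)
    (hi : i < orderOf a) (hj : j < orderOf b) (h : c ^ l * a ^ i * b ^ j = 1) :
    l = 0 ∧ i = 0 ∧ j = 0 := by
  have eq_zero : ∀ {g : G} {n : ℕ}, g ^ n = 1 → n < orderOf g → n = 0 :=
    fun hg hn => by_contra fun h0 => pow_ne_one_of_lt_orderOf h0 hn hg
  have hbj : b ^ j = 1 := by
    refine Subgroup.disjoint_def.1 (disjoint_iff.2 hacb) ?_ (Subgroup.npow_mem_zpowers b j)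
    rw [eq_inv_of_mul_eq_one_right h]
    exact inv_mem (mul_mem (pow_mem (Subgroup.subset_closure (by simp)) l)
      (pow_mem (Subgroup.subset_closure (by simp)) i))
  rw [hbj, mul_one] at h
  have hai : a ^ i = 1 := by
    refine Subgroup.disjoint_def.1 (disjoint_iff.2 hac) (Subgroup.npow_mem_zpowers a i) ?_
    rw [eq_inv_of_mul_eq_one_right h]
    exact inv_mem (Subgroup.npow_mem_zpowers c l)
  rw [hai, mul_one] at h
  exact ⟨eq_zero h hl, eq_zero hai hi, eq_zero hbj hj⟩

theorem Submonoid.eq_top_of_subset_of_closure_eq_top {G : Type*} [Group G] {s : Set G}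
    (hs : ∀ g ∈ s, IsOfFinOrder g) (hgen : Subgroup.closure s = ⊤) {M : Submonoid G}
    (hM : s ⊆ M) : M = ⊤ := by
  rw [eq_top_iff, ← Subgroup.top_toSubmonoid, ← hgen,
    Subgroup.closure_toSubmonoid_of_isOfFinOrder hs]
  exact Submonoid.closure_le.2 hM

section WeightFiltration

variable (K : Type*) {R : Type*} [CommRing K] [Ring R] [Algebra K R] (x y z : R)

/-- `z` gets weight two because in a group algebra it is, up to a unit, the commutator `xy - yx`. -/
def weightFiltration (n : ℕ) : Submodule K R :=
  Submodule.span K {v | ∃ k i j : ℕ, n ≤ 2 * k + i + j ∧ v = z ^ k * x ^ i * y ^ j}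

variable {K x y z}

namespace weightFiltration

theorem monomial_mem {n k i j : ℕ} (h : n ≤ 2 * k + i + j) :
    z ^ k * x ^ i * y ^ j ∈ weightFiltration K x y z n :=
  Submodule.subset_span ⟨k, i, j, h, rfl⟩

theorem antitone : Antitone (weightFiltration K x y z) :=
  fun _ _ h => Submodule.span_mono fun _ ⟨k, i, j, hk, hv⟩ => ⟨k, i, j, h.trans hk, hv⟩

theorem map_mem (f : R →ₗ[K] R) (d : ℕ)
    (hf : ∀ k i j, f (z ^ k * x ^ i * y ^ j) ∈ weightFiltration K x y z (2 * k + i + j + d))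
    {n : ℕ} {w : R} (hw : w ∈ weightFiltration K x y z n) :
    f w ∈ weightFiltration K x y z (n + d) := by
  refine (Submodule.map_span_le f _ _).2 ?_ ⟨w, hw, rfl⟩
  rintro _ ⟨k, i, j, hn, rfl⟩
  exact antitone (by omega) (hf k i j)

variable {n : ℕ} {w : R}

theorem mul_y_mem (hw : w ∈ weightFiltration K x y z n) :
    w * y ∈ weightFiltration K x y z (n + 1) :=
  map_mem (LinearMap.mulRight K y) 1 (fun k i j => by
    rw [LinearMap.mulRight_apply, mul_assoc, ← pow_succ]
    exact monomial_mem le_rfl) hw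

theorem mul_z_mem (hzx : Commute z x) (hzy : Commute z y) (hw : w ∈ weightFiltration K x y z n) :
    w * z ∈ weightFiltration K x y z (n + 2) :=
  map_mem (LinearMap.mulRight K z) 2 (fun k i j => by
    rw [LinearMap.mulRight_apply, mul_assoc, ← (hzy.pow_right j).eq, ← mul_assoc,
      mul_assoc _ (x ^ i), ← (hzx.pow_right i).eq, ← mul_assoc, ← pow_succ]
    exact monomial_mem (by omega)) hw

theorem x_pow_mul_mem (hzx : Commute z x) (i : ℕ) (hw : w ∈ weightFiltration K x y z n) :
    x ^ i * w ∈ weightFiltration K x y z (n + i) :=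
  map_mem (LinearMap.mulLeft K (x ^ i)) i (fun k i' j => by
    rw [LinearMap.mulLeft_apply, ← mul_assoc, ← mul_assoc, (hzx.pow_pow k i).symm.eq,
      mul_assoc _ (x ^ i), ← pow_add]
    exact monomial_mem (by omega)) hw

/-- Moving `x` to the left through `y ^ j` produces correction terms with more factors of `z`;
the induction is downwards in the power of `z`, which terminates since `z` is nilpotent. -/
theorem z_pow_mul_y_pow_mul_x_mem (hzy : Commute z y)
    (hyx : y * x = x * y - z * (y * x + y + x + 1)) {Q : ℕ} (hQ : z ^ Q = 0) (k j : ℕ) :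
    z ^ k * y ^ j * x ∈ weightFiltration K x y z (2 * k + j + 1) := by
  have zy_mem : ∀ {n} k j, n ≤ 2 * k + j → z ^ k * y ^ j ∈ weightFiltration K x y z n :=
    fun k j h => by simpa using monomial_mem (x := x) (i := 0) h
  obtain ⟨d, hd⟩ : ∃ d, Q ≤ k + d := ⟨Q, by omega⟩
  induction d generalizing k j with
  | zero =>
    have hzk : z ^ k = 0 := pow_eq_zero_of_le (by omega) hQ
    simp [hzk]
  | succ d ihk =>
    induction j with
    | zero => simpa using monomial_mem (x := x) (y := y) (z := z) (i := 1) (j := 0) le_rfl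
    | succ j ihj =>
      have hzyj : z ^ k * y ^ j * z = z ^ (k + 1) * y ^ j := by
        rw [mul_assoc, ← (hzy.pow_right j).eq, ← mul_assoc, ← pow_succ]
      have key : z ^ k * y ^ (j + 1) * x = z ^ k * y ^ j * x * y -
          (z ^ (k + 1) * y ^ (j + 1) * x + z ^ (k + 1) * y ^ (j + 1) +
            z ^ (k + 1) * y ^ j * x + z ^ (k + 1) * y ^ j) := by
        calc z ^ k * y ^ (j + 1) * x = z ^ k * y ^ j * (y * x) := by simp only [pow_succ, mul_assoc]
          _ = _ := by rw [hyx, mul_sub, ← mul_assoc _ z, hzyj]; noncomm_ring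
      rw [key]
      refine sub_mem (antitone (by omega) (mul_y_mem ihj)) (add_mem (add_mem (add_mem ?_ ?_) ?_) ?_)
      · exact antitone (by omega) (ihk (k + 1) (j + 1) (by omega))
      · exact zy_mem _ _ (by omega)
      · exact antitone (by omega) (ihk (k + 1) j (by omega))
      · exact zy_mem _ _ (by omega)

theorem mul_x_mem (hzx : Commute z x) (hzy : Commute z y)
    (hyx : y * x = x * y - z * (y * x + y + x + 1)) {Q : ℕ} (hQ : z ^ Q = 0)
    (hw : w ∈ weightFiltration K x y z n) : w * x ∈ weightFiltration K x y z (n + 1) :=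
  map_mem (LinearMap.mulRight K x) 1 (fun k i j => by
    rw [LinearMap.mulRight_apply, (hzx.pow_pow k i).eq, mul_assoc (x ^ i), mul_assoc (x ^ i)]
    exact antitone (by omega) (x_pow_mul_mem hzx i (z_pow_mul_y_pow_mul_x_mem hzy hyx hQ k j))) hw

theorem eq_bot {p q r : ℕ} (hx : x ^ p = 0) (hy : y ^ q = 0) (hz : z ^ r = 0)
    (hn : p + q + 2 * r ≤ n + 3) : weightFiltration K x y z n = ⊥ := by
  rw [eq_bot_iff, weightFiltration, Submodule.span_le]
  rintro _ ⟨k, i, j, hkij, rfl⟩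
  obtain h | h | h : r ≤ k ∨ p ≤ i ∨ q ≤ j := by omega
  all_goals simp [pow_eq_zero_of_le h, *]

end weightFiltration

end WeightFiltration

section RaisingSubmonoid

variable {K R : Type*} [CommRing K] [Ring R] [Algebra K R] {F : ℕ → Submodule K R}

def raisingSubmonoid (hF : Antitone F) : Submonoid R where
  carrier := {u | ∀ n, ∀ w ∈ F n, w * (u - 1) ∈ F (n + 1)}
  one_mem' := by simp
  mul_mem' {u v} hu hv n w hw := by
    have hwu : w * u ∈ F n := by
      simpa [mul_sub] using add_mem (hF n.le_succ (hu n w hw)) hw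
    have : w * (u * v - 1) = w * u * (v - 1) + w * (u - 1) := by noncomm_ring
    rw [this]
    exact add_mem (hv n _ hwu) (hu n w hw)

end RaisingSubmonoid

namespace MonoidAlgebra

section Monoid

variable (k G : Type*) [CommRing k] [Monoid G]

noncomputable def augmentationIdeal : Ideal (MonoidAlgebra k G) :=
  RingHom.ker (lift k k G 1)

variable {k G}

theorem mem_augmentationIdeal {v : MonoidAlgebra k G} :
    v ∈ augmentationIdeal k G ↔ lift k k G 1 v = 0 :=
  RingHom.mem_ker

theorem of_sub_one_mem_augmentationIdeal (g : G) : of k G g - 1 ∈ augmentationIdeal k G := by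
  simp [mem_augmentationIdeal]

theorem augmentationIdeal_le_span :
    (augmentationIdeal k G).restrictScalars k ≤
      Submodule.span k (Set.range fun g => of k G g - 1) := by
  intro v hv
  suffices key : ∀ w : MonoidAlgebra k G,
      w - lift k k G 1 w • 1 ∈ Submodule.span k (Set.range fun g => of k G g - 1) by
    simpa [mem_augmentationIdeal.1 hv] using key v
  intro w
  induction w using MonoidAlgebra.induction_linear with
  | zero => simp
  | add f g hf hg =>
    convert add_mem hf hg using 1
    rw [map_add]; module
  | single g r =>
    have : single g r - lift k k G 1 (single g r) • 1 = r • (of k G g - 1) := by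
      simp [smul_sub]
    rw [this]
    exact Submodule.smul_mem _ _ (Submodule.subset_span ⟨g, rfl⟩)

instance augmentationIdeal_isMaximal {k : Type*} [Field k] : (augmentationIdeal k G).IsMaximal :=
  RingHom.ker_isMaximal_of_surjective _ fun r => ⟨single 1 r, by simp⟩

instance : (augmentationIdeal k G).IsTwoSided :=
  inferInstanceAs (RingHom.ker _).IsTwoSided

variable {F : ℕ → Submodule k (MonoidAlgebra k G)}

theorem augmentationIdeal_pow_succ_le (hF : Antitone F) (h1 : 1 ∈ F 0)
    (hG : ∀ g, of k G g ∈ raisingSubmonoid hF) (n : ℕ) :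
    (augmentationIdeal k G ^ (n + 1)).restrictScalars k ≤ F (n + 1) := by
  have hmul : ∀ n, ∀ w ∈ F n, ∀ v ∈ augmentationIdeal k G, w * v ∈ F (n + 1) := by
    intro n w hw v hv
    have hle : (augmentationIdeal k G).restrictScalars k ≤
        (F (n + 1)).comap (LinearMap.mulLeft k w) :=
      augmentationIdeal_le_span.trans <| Submodule.span_le.2 <| by
        rintro _ ⟨g, rfl⟩; exact hG g n w hw
    exact hle hv
  induction n with
  | zero => exact fun v hv => by simpa using hmul 0 1 h1 v (by simpa [Submodule.pow_one] using hv)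
  | succ n ih =>
    intro v hv
    rw [Submodule.restrictScalars_mem, Submodule.pow_succ] at hv
    exact Submodule.mul_induction_on hv (fun w hw v hv => hmul _ w (ih hw) v hv)
      fun _ _ => add_mem

end Monoid

section Group

variable {k G : Type*} [CommRing k] [Group G]

theorem of_commutator_sub_one_mem_sq (g h : G) :
    of k G (g⁻¹ * h⁻¹ * g * h) - 1 ∈ augmentationIdeal k G ^ 2 := by
  have : of k G (g⁻¹ * h⁻¹ * g * h) - 1 = of k G (g⁻¹ * h⁻¹) *
      ((of k G g - 1) * (of k G h - 1) - (of k G h - 1) * (of k G g - 1)) := by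
    rw [show ∀ u v : MonoidAlgebra k G, (u - 1) * (v - 1) - (v - 1) * (u - 1) = u * v - v * u by
      intros; noncomm_ring]
    simp [mul_sub, mul_assoc, one_def]
  rw [this, Submodule.pow_succ, Submodule.pow_one]
  exact Ideal.mul_mem_left _ _ (sub_mem
    (Ideal.mul_mem_mul (of_sub_one_mem_augmentationIdeal g) (of_sub_one_mem_augmentationIdeal h))
    (Ideal.mul_mem_mul (of_sub_one_mem_augmentationIdeal h) (of_sub_one_mem_augmentationIdeal g)))

theorem augmentationIdeal_pow_le_weightFiltration {a b c : G}
    (hgen : Subgroup.closure {a, b, c} = ⊤) (ha : IsOfFinOrder a) (hb : IsOfFinOrder b)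
    (hc : IsOfFinOrder c) (hrel : a * b = c * (b * a)) (hac : Commute a c) (hbc : Commute b c)
    {Q : ℕ} (hQ : (of k G c - 1) ^ Q = 0) (n : ℕ) :
    (augmentationIdeal k G ^ (n + 1)).restrictScalars k ≤
      weightFiltration k (of k G a - 1) (of k G b - 1) (of k G c - 1) (n + 1) := by
  set x := of k G a - 1
  set y := of k G b - 1
  set z := of k G c - 1
  have commute_sub_one : ∀ {g h : G}, Commute g h → Commute (of k G g - 1) (of k G h - 1) :=
    fun hgh => ((hgh.map _).sub_right (.one_right _)).sub_left (.one_left _)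
  have hzx : Commute z x := commute_sub_one hac.symm
  have hzy : Commute z y := commute_sub_one hbc.symm
  have hyx : y * x = x * y - z * (y * x + y + x + 1) :=
    sub_one_mul_sub_one_eq_of_mul_eq (by rw [← map_mul, ← map_mul, ← map_mul, hrel])
  have hW := weightFiltration.antitone (K := k) (x := x) (y := y) (z := z)
  have hraise : (raisingSubmonoid hW).comap (of k G) = ⊤ := by
    refine Submonoid.eq_top_of_subset_of_closure_eq_top ?_ hgen ?_
    · rintro g (rfl | rfl | rfl) <;> assumption
    · rintro g (rfl | rfl | rfl) <;> intro n w hw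
      · exact weightFiltration.mul_x_mem hzx hzy hyx hQ hw
      · exact weightFiltration.mul_y_mem hw
      · exact hW (by omega) (weightFiltration.mul_z_mem hzx hzy hw)
  have h1 : 1 ∈ weightFiltration k x y z 0 := by
    simpa using weightFiltration.monomial_mem (K := k) (x := x) (y := y) (z := z)
      (k := 0) (i := 0) (j := 0) le_rfl
  exact augmentationIdeal_pow_succ_le hW h1
    (fun g => Submonoid.mem_comap.1 (hraise ▸ Submonoid.mem_top g)) n

end Group

theorem sum_pow_mul_sum_pow_mul_sum_pow_ne_zero {k G : Type*} [Semiring k] [Nontrivial k] [Monoid G]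
    {a b c : G} {A B C : ℕ} (hA : 0 < A) (hB : 0 < B) (hC : 0 < C)
    (h : ∀ l < C, ∀ i < A, ∀ j < B, c ^ l * a ^ i * b ^ j = 1 → l = 0 ∧ i = 0 ∧ j = 0) :
    (∑ l ∈ range C, of k G (c ^ l)) * (∑ i ∈ range A, of k G (a ^ i)) *
      (∑ j ∈ range B, of k G (b ^ j)) ≠ 0 := by
  classical
  rw [sum_mul_sum, ← sum_product', sum_mul_sum, ← sum_product']
  intro h0
  have := congr_arg (fun v => v.coeff 1) h0
  simp only [of_apply, single_mul_single, mul_one, coeff_sum, coeff_single, Finsupp.finsetSum_apply,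
    Finsupp.single_apply] at this
  rw [sum_eq_single ((0, 0), 0)] at this
  · simp at this
  · rintro ⟨⟨l, i⟩, j⟩ hmem hne
    simp only [mem_product, mem_range] at hmem
    rw [if_neg]
    intro h1
    obtain ⟨rfl, rfl, rfl⟩ := h l hmem.1.1 i hmem.1.2 j hmem.2 h1
    exact hne rfl
  · simp [hA, hB, hC]

section CharP

variable {p : ℕ} [Fact p.Prime] {G : Type*}

theorem of_sub_one_pow_eq_zero [Monoid G] {g : G} {m : ℕ} (hg : g ^ p ^ m = 1) :
    (of (ZMod p) G g - 1) ^ p ^ m = 0 := by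
  rw [sub_one_pow_char_pow, ← map_pow, hg, map_one, sub_self]

theorem of_sub_one_pow_eq_sum [Monoid G] (g : G) (m : ℕ) :
    (of (ZMod p) G g - 1) ^ (p ^ m - 1) = ∑ i ∈ range (p ^ m), of (ZMod p) G (g ^ i) := by
  simp only [sub_one_pow_char_pow_sub_one, map_pow]

variable [Group G] {a b c : G} {α β γ : ℕ}

theorem augmentationIdeal_pow_eq_bot (hgen : Subgroup.closure {a, b, c} = ⊤)
    (hrel : a * b = c * (b * a)) (hac : Commute a c) (hbc : Commute b c)
    (ha : a ^ p ^ α = 1) (hb : b ^ p ^ β = 1) (hc : c ^ p ^ γ = 1) {n : ℕ}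
    (hn : p ^ α + p ^ β + 2 * p ^ γ ≤ n + 4) :
    augmentationIdeal (ZMod p) G ^ (n + 1) = ⊥ := by
  have hp : 0 < p := (Fact.out : p.Prime).pos
  have hc0 := of_sub_one_pow_eq_zero hc
  have hle := augmentationIdeal_pow_le_weightFiltration hgen
    (isOfFinOrder_iff_pow_eq_one.2 ⟨_, pow_pos hp _, ha⟩)
    (isOfFinOrder_iff_pow_eq_one.2 ⟨_, pow_pos hp _, hb⟩)
    (isOfFinOrder_iff_pow_eq_one.2 ⟨_, pow_pos hp _, hc⟩) hrel hac hbc hc0 n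
  rwa [weightFiltration.eq_bot (of_sub_one_pow_eq_zero ha) (of_sub_one_pow_eq_zero hb) hc0
    (by omega), le_bot_iff, Submodule.restrictScalars_eq_bot_iff] at hle

theorem augmentationIdeal_pow_ne_bot (hab : a⁻¹ * b⁻¹ * a * b = c)
    (hoa : orderOf a = p ^ α) (hob : orderOf b = p ^ β) (hoc : orderOf c = p ^ γ)
    (hac : Subgroup.zpowers a ⊓ Subgroup.zpowers c = ⊥)
    (hacb : Subgroup.closure {a, c} ⊓ Subgroup.zpowers b = ⊥) :
    augmentationIdeal (ZMod p) G ^ (2 * (p ^ γ - 1) + (p ^ α - 1) + (p ^ β - 1)) ≠ ⊥ := by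
  have hp : 0 < p := (Fact.out : p.Prime).pos
  have hz : of (ZMod p) G c - 1 ∈ augmentationIdeal (ZMod p) G ^ 2 :=
    hab ▸ of_commutator_sub_one_mem_sq a b
  have hmem := Ideal.pow_mul_pow_mul_pow_mem (of_sub_one_mem_augmentationIdeal a)
    (of_sub_one_mem_augmentationIdeal b) hz (p ^ γ - 1) (p ^ α - 1) (p ^ β - 1)
  have hne : (of (ZMod p) G c - 1) ^ (p ^ γ - 1) * (of (ZMod p) G a - 1) ^ (p ^ α - 1) *
      (of (ZMod p) G b - 1) ^ (p ^ β - 1) ≠ 0 := by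
    rw [of_sub_one_pow_eq_sum, of_sub_one_pow_eq_sum, of_sub_one_pow_eq_sum, ← hoa, ← hob, ← hoc]
    exact sum_pow_mul_sum_pow_mul_sum_pow_ne_zero (hoa ▸ pow_pos hp _) (hob ▸ pow_pos hp _)
      (hoc ▸ pow_pos hp _) fun l hl i hi j hj =>
        eq_zero_of_pow_mul_pow_mul_pow_eq_one hac hacb hl hi hj
  exact fun hbot => hne ((Submodule.mem_bot _).1 (hbot ▸ hmem))

end CharP

end MonoidAlgebra

theorem loewyLength_eq_succ_of_jacobson_pow {p : ℕ} {G : Type*} [Group G] {n : ℕ}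
    (h : Ideal.jacobson (⊥ : Ideal (MonoidAlgebra (ZMod p) G)) ^ (n + 1) = ⊥)
    (h' : Ideal.jacobson (⊥ : Ideal (MonoidAlgebra (ZMod p) G)) ^ n ≠ ⊥) :
    loewyLength p G = n + 1 := by
  refine le_antisymm (Nat.sInf_le ⟨n.succ_pos, h⟩) (le_csInf ⟨_, n.succ_pos, h⟩ ?_)
  rintro m ⟨-, hm⟩
  by_contra! hlt
  exact h' (eq_bot_iff.2 ((Ideal.pow_le_pow_right (show m ≤ n by omega)).trans hm.le))

theorem loewyLength_G1_general (α β γ : ℕ)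
    (G : Type*) [Group G] (a b c : G)
    (hgen : Subgroup.closure {a, b, c} = ⊤)
    (hab : a⁻¹ * b⁻¹ * a * b = c)
    (hac : a * c = c * a) (hbc : b * c = c * b)
    (hoa : orderOf a = 2 ^ α) (hob : orderOf b = 2 ^ β) (hoc : orderOf c = 2 ^ γ)
    (hint1 : Subgroup.zpowers a ⊓ Subgroup.zpowers c = ⊥)
    (hint2 : Subgroup.closure {a, c} ⊓ Subgroup.zpowers b = ⊥) :
    loewyLength 2 G = 2 ^ α + 2 ^ β + 2 ^ (γ + 1) - 3 := by
  have hrel : a * b = c * (b * a) := by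
    rw [(Commute.mul_right hbc.symm hac.symm).eq, ← hab]; group
  have hupper := MonoidAlgebra.augmentationIdeal_pow_eq_bot (p := 2) hgen hrel hac hbc
    (hoa ▸ pow_orderOf_eq_one a) (hob ▸ pow_orderOf_eq_one b) (hoc ▸ pow_orderOf_eq_one c)
    (n := 2 * (2 ^ γ - 1) + (2 ^ α - 1) + (2 ^ β - 1)) (by omega)
  have hjac := Ideal.jacobson_bot_eq_of_isMaximal_of_pow_eq_bot hupper
  rw [loewyLength_eq_succ_of_jacobson_pow (hjac ▸ hupper)
    (hjac ▸ MonoidAlgebra.augmentationIdeal_pow_ne_bot hab hoa hob hoc hint1 hint2), pow_succ]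
  have := Nat.one_le_two_pow (n := α); have := Nat.one_le_two_pow (n := β)
  have := Nat.one_le_two_pow (n := γ)
  omega

/-- For the group `G₁ = (⟨c⟩ × ⟨a⟩) ⋊ ⟨b⟩` with `[a,b] = c`,
`[a,c] = [b,c] = 1`, `o(a) = 2^α`, `o(b) = 2^β`, `o(c) = 2^γ` and `α ≥ β ≥ γ ≥ 1`,
the Loewy length satisfies `L(G) = 2^α + 2^β + 2^(γ+1) - 3`. -/
theorem loewyLength_G1 (α β γ : ℕ) (hβα : β ≤ α) (hγβ : γ ≤ β) (hγ : 1 ≤ γ)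
    (G : Type*) [Group G] [Fintype G] (a b c : G)
    (hcard : Fintype.card G = 2 ^ (α + β + γ))
    (hgen : Subgroup.closure {a, b, c} = ⊤)
    (hab : a⁻¹ * b⁻¹ * a * b = c)
    (hac : a * c = c * a) (hbc : b * c = c * b)
    (hoa : orderOf a = 2 ^ α) (hob : orderOf b = 2 ^ β) (hoc : orderOf c = 2 ^ γ)
    (hint1 : Subgroup.zpowers a ⊓ Subgroup.zpowers c = ⊥)
    (hint2 : Subgroup.closure {a, c} ⊓ Subgroup.zpowers b = ⊥) :
    loewyLength 2 G = 2 ^ α + 2 ^ β + 2 ^ (γ + 1) - 3 :=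
  loewyLength_G1_general α β γ G a b c hgen hab hac hbc hoa hob hoc hint1 hint2
end

section
/- Let α, β, γ be integers with α ≥ 2γ, β ≥ γ ≥ 1 and α + β > 3, and let G be a finite group of order 2^(α+β) together with elements a, b such that G is generated by {a, b}, orderOf a = 2^α, orderOf b = 2^β, b⁻¹ a b = a^(1 + 2^(α−γ)), and the cyclic subgroups ⟨a⟩ and ⟨b⟩ intersect trivially (this is the group G₂ = ⟨a⟩ ⋊ ⟨b⟩). Then D_o(G) = d(G) + 1; equivalently, the small Davenport constant of G equals 2^α + 2^β − 2, the multiset consisting of 2^α − 1 copies of a and 2^β − 1 copies of b being product-one free. -/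
open Polynomial MonoidAlgebra

theorem List.count_nil_sublists' {α : Type*} [DecidableEq α] (l : List α) :
    l.sublists'.count [] = 1 := by
  induction l with
  | nil => simp
  | cons g l ih =>
    rw [List.sublists'_cons, List.count_append, ih, List.count_eq_zero.mpr (by simp)]

theorem MonoidAlgebra.prod_map_of_add_one {k G : Type*} [Semiring k] [Monoid G] (l : List G) :
    (l.map fun g => of k G g + 1).prod = ((l.sublists'.map List.prod).map (of k G)).sum := by
  induction l with
  | nil => simp [one_def]
  | cons g l ih =>
    rw [List.map_cons, List.prod_cons, ih, List.sublists'_cons, List.map_append, List.map_append,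
      List.sum_append, add_mul, one_mul, add_comm, List.map_map, List.map_map, List.map_map,
      ← List.sum_map_mul_left]
    congr 2
    exact List.map_congr_left fun t _ => by simp

theorem MonoidAlgebra.coeff_sum_map_of {k G : Type*} [Semiring k] [Monoid G] [DecidableEq G]
    (L : List G) (g : G) : ((L.map (of k G)).sum).coeff g = L.count g := by
  induction L with
  | nil => simp
  | cons h L ih =>
    rw [List.map_cons, List.sum_cons, coeff_add, Finsupp.add_apply, ih, of_apply, coeff_single,
      Finsupp.single_apply, List.count_cons]
    by_cases hh : h = g <;> simp [hh, add_comm]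

theorem Polynomial.X_pow_succ_dvd_X_mul_one_add_X_mul_pow_sub {R : Type*} [CommRing R]
    (r : R[X]) (i : ℕ) : X ^ (i + 1) ∣ (X * (1 + X * r)) ^ i - X ^ i := by
  rw [mul_pow, ← mul_sub_one, pow_succ]
  refine mul_dvd_mul_left _ ((dvd_mul_right X r).trans ?_)
  have := sub_dvd_pow_sub_pow (1 + X * r) 1 i
  rwa [add_sub_cancel_left, one_pow] at this

theorem Polynomial.exists_X_add_one_pow_sub_one_eq_of_odd {m : ℕ} (hm : Odd m) :
    ∃ r : (ZMod 2)[X], (X + 1 : (ZMod 2)[X]) ^ m - 1 = X * (1 + X * r) := by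
  have hdvd : X ^ 2 ∣ (X + 1 : (ZMod 2)[X]) ^ m - 1 - X := by
    refine X_pow_dvd_iff.mpr fun d hd => ?_
    interval_cases d <;> simp [coeff_X_add_one_pow, coeff_one, coeff_X, hm.natCast_zmod_two]
  obtain ⟨r, hr⟩ := hdvd
  exact ⟨r, by linear_combination hr⟩

theorem Subgroup.zpowers_normal_of_closure_pair_eq_top {G : Type*} [Group G] [Finite G]
    {a c : G} (hgen : Subgroup.closure {a, c} = ⊤) (hc : c * a * c⁻¹ ∈ Subgroup.zpowers a) :
    (Subgroup.zpowers a).Normal := by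
  rw [← Subgroup.normalizer_eq_top_iff, eq_top_iff, ← hgen, Subgroup.closure_le]
  rintro x (rfl | rfl)
  · exact Subgroup.le_normalizer (Subgroup.mem_zpowers x)
  · refine Subgroup.mem_normalizer_fintype fun n hn => ?_
    obtain ⟨z, rfl⟩ := Subgroup.mem_zpowers_iff.mp hn
    rw [← conj_zpow]
    exact zpow_mem hc z

section ProductOneFree

variable {G : Type*} [Group G]

theorem ProductOneFreeM.orderedProductOneFree {l : List G}
    (h : ProductOneFreeM (l : Multiset G)) : OrderedProductOneFree l :=
  fun t ht hne => h t (Multiset.coe_le.mpr ht.subperm) (by simpa using hne) t rfl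

theorem smallDavenport_eq {n : ℕ} {s : Multiset G} (hs : ProductOneFreeM s)
    (hcard : Multiset.card s = n)
    (hbound : ∀ l : List G, n < l.length → ¬ OrderedProductOneFree l) :
    smallDavenport G = n := by
  have hle : ∀ k ∈ {k | ∃ s : Multiset G, ProductOneFreeM s ∧ Multiset.card s = k}, k ≤ n := by
    rintro _ ⟨s', hs', rfl⟩
    by_contra! hlt
    refine hbound s'.toList (by simpa using hlt) (ProductOneFreeM.orderedProductOneFree ?_)
    rwa [Multiset.coe_toList]
  exact le_antisymm (csSup_le ⟨n, s, hs, hcard⟩ hle) (le_csSup ⟨n, hle⟩ ⟨s, hs, hcard⟩)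

theorem orderedDavenport_eq {n : ℕ} {s : Multiset G} (hs : ProductOneFreeM s)
    (hcard : Multiset.card s = n)
    (hbound : ∀ l : List G, n < l.length → ¬ OrderedProductOneFree l) :
    orderedDavenport G = n + 1 := by
  refine le_antisymm (Nat.sInf_le fun l hl => hbound l hl) (le_csInf ⟨n + 1, hbound⟩ ?_)
  intro k hk
  by_contra! hlt
  refine hk s.toList (by simpa [hcard] using Nat.le_of_lt_succ hlt)
    (ProductOneFreeM.orderedProductOneFree ?_)
  rwa [Multiset.coe_toList]

theorem List.eq_nil_of_prod_eq_one_of_count_le [DecidableEq G] {a b : G} (N : Subgroup G)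
    [N.Normal] (ha : a ∈ N) (hb : ∀ j : ℕ, b ^ j ∈ N → b ^ j = 1) {l : List G}
    (hmem : ∀ x ∈ l, x = a ∨ x = b) (hca : l.count a ≤ orderOf a - 1)
    (hcb : l.count b ≤ orderOf b - 1) (hprod : l.prod = 1) : l = [] := by
  have hcount_b : l.count b = 0 := by
    by_contra h
    refine pow_ne_one_of_lt_orderOf h (by omega) (hb _ ((QuotientGroup.eq_one_iff _).mp ?_))
    change QuotientGroup.mk' N _ = 1
    rw [map_pow, ← List.prod_map_eq_pow_single b, ← map_list_prod, hprod, map_one]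
    intro x hxb hx
    rcases hmem x hx with rfl | rfl
    · exact (QuotientGroup.eq_one_iff _).mpr ha
    · exact absurd rfl hxb
  have hcount_a : l.count a = 0 := by
    by_contra h
    refine pow_ne_one_of_lt_orderOf (x := a) h (by omega) ?_
    rw [← List.prod_eq_pow_single a, hprod]
    intro x hxa hx
    rcases hmem x hx with rfl | rfl
    · exact absurd rfl hxa
    · exact absurd (List.count_pos_iff.mpr hx) (by omega)
  refine List.eq_nil_iff_forall_not_mem.mpr fun x hx => ?_
  have := List.count_pos_iff.mpr hx
  rcases hmem x hx with rfl | rfl <;> omega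

theorem productOneFreeM_replicate_add_replicate {a b : G} (hab : a ≠ b) (N : Subgroup G)
    [N.Normal] (ha : a ∈ N) (hb : ∀ j : ℕ, b ^ j ∈ N → b ^ j = 1) :
    ProductOneFreeM
      (Multiset.replicate (orderOf a - 1) a + Multiset.replicate (orderOf b - 1) b) := by
  classical
  intro t hts ht0 l hl hprod
  have hcount (x : G) : l.count x ≤ Multiset.count x
      (Multiset.replicate (orderOf a - 1) a + Multiset.replicate (orderOf b - 1) b) := by
    rw [← Multiset.coe_count, hl]
    exact Multiset.count_le_of_le x hts
  refine ht0 (hl ▸ (Multiset.coe_eq_zero _).mpr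
    (List.eq_nil_of_prod_eq_one_of_count_le N ha hb (fun x hx => ?_) ?_ ?_ hprod))
  · have := Multiset.mem_of_le hts (hl ▸ Multiset.mem_coe.mpr hx)
    simp only [Multiset.mem_add, Multiset.mem_replicate] at this
    tauto
  · simpa [Multiset.count_replicate, hab.symm] using hcount a
  · simpa [Multiset.count_replicate, hab] using hcount b

theorem OrderedProductOneFree.count_one_map_prod_sublists' [DecidableEq G] {l : List G}
    (h : OrderedProductOneFree l) : (l.sublists'.map List.prod).count 1 = 1 := by
  rw [List.count, List.countP_map, ← List.count_nil_sublists' l, List.count]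
  refine List.countP_congr fun t ht => ?_
  by_cases hne : t = []
  · simp [hne]
  · simp [hne, h t (List.mem_sublists'.mp ht) hne]

end ProductOneFree

namespace GroupAlgebraFiltration

variable {G : Type*} [Group G]

local notation "𝔽₂[" G "]" => MonoidAlgebra (ZMod 2) G

instance : CharP 𝔽₂[G] 2 := charP_of_injective_algebraMap' (ZMod 2) 2

noncomputable def aug (g : G) : 𝔽₂[G] := of (ZMod 2) G g - 1

theorem aug_eq_of_add_one (g : G) : aug g = of (ZMod 2) G g + 1 :=
  CharTwo.sub_eq_add _ _

theorem aug_one : aug (1 : G) = 0 := by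
  rw [aug, map_one, sub_self]

theorem aug_mul (g h : G) : aug (g * h) = aug g * aug h + aug h + aug g := by
  simp only [aug, map_mul]
  noncomm_ring

theorem aug_pow (g : G) (n : ℕ) : aug (g ^ n) = aeval (aug g) ((X + 1 : (ZMod 2)[X]) ^ n - 1) := by
  simp [aug]

theorem aug_pow_two_pow_eq_zero {g : G} {n : ℕ} (h : g ^ 2 ^ n = 1) : aug g ^ 2 ^ n = 0 := by
  rw [aug, sub_pow_char_pow_of_commute (p := 2) (h := Commute.one_right _), ← map_pow, h, map_one,
    one_pow, sub_self]

theorem prod_map_aug_ne_zero {l : List G} (h : OrderedProductOneFree l) :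
    (l.map aug).prod ≠ 0 := by
  classical
  intro h0
  have := congrArg (fun x : 𝔽₂[G] => x.coeff 1) h0
  rw [show (aug : G → 𝔽₂[G]) = fun g => of (ZMod 2) G g + 1 from funext aug_eq_of_add_one,
    prod_map_of_add_one, coeff_sum_map_of, h.count_one_map_prod_sublists'] at this
  simp at this

noncomputable def filtration (a b : G) (k : ℕ) : Submodule (ZMod 2) 𝔽₂[G] :=
  Submodule.span (ZMod 2) {x | ∃ i j, k ≤ i + j ∧ x = aug a ^ i * aug b ^ j}

variable {a b : G}

theorem filtration_antitone : Antitone (filtration a b) :=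
  fun _ _ h => Submodule.span_mono fun _ ⟨i, j, hk, hx⟩ => ⟨i, j, h.trans hk, hx⟩

theorem pow_mul_pow_mem_filtration {i j k : ℕ} (h : k ≤ i + j) :
    aug a ^ i * aug b ^ j ∈ filtration a b k :=
  Submodule.subset_span ⟨i, j, h, rfl⟩

theorem aeval_mul_pow_mem_filtration {p : (ZMod 2)[X]} {i j k : ℕ} (hp : X ^ i ∣ p)
    (h : k ≤ i + j) : aeval (aug a) p * aug b ^ j ∈ filtration a b k := by
  obtain ⟨q, rfl⟩ := hp
  induction q using Polynomial.induction_on' with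
  | add p q hp hq => rw [mul_add, map_add, add_mul]; exact add_mem hp hq
  | monomial n c =>
    rw [← C_mul_X_pow_eq_monomial, mul_left_comm, ← pow_add, map_mul, aeval_C, map_pow, aeval_X,
      ← Algebra.smul_def, smul_mul_assoc]
    exact Submodule.smul_mem _ c (pow_mul_pow_mem_filtration (by omega))

theorem map_mem_filtration {f : 𝔽₂[G] →ₗ[ZMod 2] 𝔽₂[G]} {d : ℕ}
    (hf : ∀ i j, f (aug a ^ i * aug b ^ j) ∈ filtration a b (i + j + d)) {k : ℕ} {x : 𝔽₂[G]}
    (hx : x ∈ filtration a b k) : f x ∈ filtration a b (k + d) := by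
  refine (Submodule.span_le (p := (filtration a b (k + d)).comap f)).mpr ?_ hx
  rintro _ ⟨i, j, hk, rfl⟩
  exact filtration_antitone (by omega) (hf i j)

theorem mul_aug_pow_mem_filtration {k : ℕ} {x : 𝔽₂[G]} (hx : x ∈ filtration a b k) (j : ℕ) :
    x * aug b ^ j ∈ filtration a b (k + j) :=
  map_mem_filtration (f := LinearMap.mulRight (ZMod 2) (aug b ^ j))
    (fun i j' => by
      rw [LinearMap.mulRight_apply, mul_assoc, ← pow_add]
      exact pow_mul_pow_mem_filtration (by omega)) hx

/-- Conjugation by `b` maps `a - 1` to `a ^ m - 1 = (a - 1) (1 + (a - 1) r(a - 1))`, which for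
odd `m` agrees with `a - 1` modulo `(a - 1) ^ 2`; this is why `b - 1` raises the degree. -/
theorem aug_mul_aug_pow_mem_filtration {m : ℕ} (hm : Odd m) (hba : b * a = a ^ m * b) (i : ℕ) :
    aug b * aug a ^ i ∈ filtration a b (i + 1) := by
  obtain ⟨r, hr⟩ := exists_X_add_one_pow_sub_one_eq_of_odd hm
  have hsemiconj : SemiconjBy (of (ZMod 2) G b) (aug a) (aug (a ^ m)) := by
    simp only [SemiconjBy, aug, mul_sub, sub_mul, mul_one, one_mul, ← map_mul, hba]
  have hsplit : aug b * aug a ^ i = aug (a ^ m) ^ i * aug b + (aug (a ^ m) ^ i - aug a ^ i) := by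
    rw [aug, sub_mul, (hsemiconj.pow_right i).eq, aug]
    noncomm_ring
  have hpow : aug (a ^ m) ^ i = aeval (aug a) ((X * (1 + X * r)) ^ i) := by
    rw [aug_pow, hr, map_pow]
  rw [hsplit, hpow]
  have hdvd_pow : X ^ i ∣ (X * (1 + X * r)) ^ i := mul_pow X (1 + X * r) i ▸ dvd_mul_right _ _
  refine add_mem ?_ ?_
  · have := aeval_mul_pow_mem_filtration (a := a) (b := b) (j := 1) hdvd_pow le_rfl
    rwa [pow_one] at this
  have := aeval_mul_pow_mem_filtration (a := a) (b := b) (j := 0)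
    (X_pow_succ_dvd_X_mul_one_add_X_mul_pow_sub r i) le_rfl
  simpa only [pow_zero, mul_one, add_zero, map_sub, map_pow, aeval_X] using this

theorem aug_mul_mem_filtration {m : ℕ} (hm : Odd m) (hba : b * a = a ^ m * b)
    (hgen : Submonoid.closure {a, b} = ⊤) (g : G) {k : ℕ} {x : 𝔽₂[G]}
    (hx : x ∈ filtration a b k) : aug g * x ∈ filtration a b (k + 1) := by
  have hgenerator : ∀ s ∈ ({a, b} : Set G), ∀ {k : ℕ} {x : 𝔽₂[G]},
      x ∈ filtration a b k → aug s * x ∈ filtration a b (k + 1) := by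
    rintro s (rfl | rfl) k x hx
    · refine map_mem_filtration (f := LinearMap.mulLeft (ZMod 2) (aug s)) (fun i j => ?_) hx
      rw [LinearMap.mulLeft_apply, ← mul_assoc, ← pow_succ']
      exact pow_mul_pow_mem_filtration (by omega)
    · refine map_mem_filtration (f := LinearMap.mulLeft (ZMod 2) (aug s)) (fun i j => ?_) hx
      rw [LinearMap.mulLeft_apply, ← mul_assoc]
      exact filtration_antitone (by omega)
        (mul_aug_pow_mem_filtration (aug_mul_aug_pow_mem_filtration hm hba i) j)
  induction g using Submonoid.induction_of_closure_eq_top_left hgen generalizing k x with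
  | one => simp [aug_one]
  | mul_left s hs g ih =>
    rw [aug_mul, add_mul, add_mul, mul_assoc]
    exact add_mem (add_mem (filtration_antitone (by omega) (hgenerator s hs (ih hx))) (ih hx))
      (hgenerator s hs hx)

theorem prod_map_aug_mem_filtration {m : ℕ} (hm : Odd m) (hba : b * a = a ^ m * b)
    (hgen : Submonoid.closure {a, b} = ⊤) (l : List G) :
    (l.map aug).prod ∈ filtration a b l.length := by
  induction l with
  | nil => simpa using pow_mul_pow_mem_filtration (a := a) (b := b) (i := 0) (j := 0) le_rfl
  | cons g l ih =>
    rw [List.map_cons, List.prod_cons, List.length_cons]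
    exact aug_mul_mem_filtration hm hba hgen g ih

theorem filtration_eq_bot {α β : ℕ} (ha : a ^ 2 ^ α = 1) (hb : b ^ 2 ^ β = 1) :
    filtration a b (2 ^ α + 2 ^ β - 1) = ⊥ := by
  refine Submodule.span_eq_bot.mpr ?_
  rintro _ ⟨i, j, h, rfl⟩
  rcases le_or_gt (2 ^ α) i with hi | hi
  · rw [pow_eq_zero_of_le hi (aug_pow_two_pow_eq_zero ha), zero_mul]
  · rw [pow_eq_zero_of_le (by omega) (aug_pow_two_pow_eq_zero hb), mul_zero]

end GroupAlgebraFiltration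

open GroupAlgebraFiltration in
theorem not_orderedProductOneFree_of_length_le {G : Type*} [Group G] {a b : G} {m α β : ℕ}
    (hgen : Subgroup.closure {a, b} = ⊤) (hm : Odd m) (hba : b * a = a ^ m * b)
    (ha : a ^ 2 ^ α = 1) (hb : b ^ 2 ^ β = 1)
    {l : List G} (hl : 2 ^ α + 2 ^ β - 1 ≤ l.length) : ¬ OrderedProductOneFree l := by
  have hmon : Submonoid.closure {a, b} = ⊤ := by
    rw [← Subgroup.closure_toSubmonoid_of_isOfFinOrder, hgen, Subgroup.top_toSubmonoid]
    rintro x (rfl | rfl)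
    exacts [isOfFinOrder_iff_pow_eq_one.mpr ⟨_, by positivity, ha⟩,
      isOfFinOrder_iff_pow_eq_one.mpr ⟨_, by positivity, hb⟩]
  intro hfree
  refine prod_map_aug_ne_zero hfree ((Submodule.mem_bot (ZMod 2)).mp ?_)
  rw [← filtration_eq_bot ha hb]
  exact filtration_antitone hl (prod_map_aug_mem_filtration hm hba hmon l)

theorem orderedDavenport_eq_smallDavenport_succ_G2_general (α β γ : ℕ) (h1 : 2 * γ ≤ α) (h3 : 1 ≤ γ)
    (G : Type*) [Group G] [Fintype G] (a b : G)
    (hgen : Subgroup.closure {a, b} = ⊤)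
    (hoa : orderOf a = 2 ^ α) (hob : orderOf b = 2 ^ β)
    (hconj : b⁻¹ * a * b = a ^ (1 + 2 ^ (α - γ)))
    (hint : Subgroup.zpowers a ⊓ Subgroup.zpowers b = ⊥) :
    orderedDavenport G = smallDavenport G + 1 ∧
    smallDavenport G = 2 ^ α + 2 ^ β - 2 ∧
    ProductOneFreeM (Multiset.replicate (2 ^ α - 1) a + Multiset.replicate (2 ^ β - 1) b) := by
  have hm : Odd (1 + 2 ^ (α - γ)) := (Nat.even_pow.mpr ⟨even_two, by omega⟩).one_add
  have hgen' : Subgroup.closure {a, b⁻¹} = ⊤ := by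
    refine eq_top_iff.mpr (hgen ▸ (Subgroup.closure_le _).mpr ?_)
    rintro x (rfl | rfl)
    exacts [Subgroup.subset_closure (by simp),
      inv_inv x ▸ inv_mem (Subgroup.subset_closure (by simp))]
  have : (Subgroup.zpowers a).Normal := Subgroup.zpowers_normal_of_closure_pair_eq_top hgen'
    (by rw [inv_inv, hconj]; exact pow_mem (Subgroup.mem_zpowers a) _)
  have hinter (j : ℕ) (hj : b ^ j ∈ Subgroup.zpowers a) : b ^ j = 1 :=
    Subgroup.mem_bot.mp (hint ▸ ⟨hj, pow_mem (Subgroup.mem_zpowers b) j⟩)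
  have hab : a ≠ b := by
    rintro rfl
    have ha1 : a = 1 := by simpa using hinter 1 (by simp)
    rw [ha1, orderOf_one, eq_comm, Nat.pow_eq_one] at hoa
    omega
  have hfree := hoa ▸ hob ▸
    productOneFreeM_replicate_add_replicate hab _ (Subgroup.mem_zpowers a) hinter
  have hcard : Multiset.card (Multiset.replicate (2 ^ α - 1) a +
      Multiset.replicate (2 ^ β - 1) b) = 2 ^ α + 2 ^ β - 2 := by
    simp only [Multiset.card_add, Multiset.card_replicate]
    have := Nat.one_le_two_pow (n := α); have := Nat.one_le_two_pow (n := β)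
    omega
  have hbound (l : List G) (hl : 2 ^ α + 2 ^ β - 2 < l.length) : ¬ OrderedProductOneFree l :=
    not_orderedProductOneFree_of_length_le hgen' hm (eq_mul_inv_of_mul_eq hconj)
      (hoa ▸ pow_orderOf_eq_one a) (by rw [inv_pow, ← hob, pow_orderOf_eq_one, inv_one])
      (by omega)
  have hd := smallDavenport_eq hfree hcard hbound
  exact ⟨by rw [hd, orderedDavenport_eq hfree hcard hbound], hd, hfree⟩

/-- For the group `G₂ = ⟨a⟩ ⋊ ⟨b⟩` as above, `D_o(G) = d(G) + 1`;
equivalently, the small Davenport constant of `G` equals `2^α + 2^β - 2`, the multiset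
consisting of `2^α - 1` copies of `a` and `2^β - 1` copies of `b` being product-one
free. -/
theorem orderedDavenport_eq_smallDavenport_succ_G2 (α β γ : ℕ) (h1 : 2 * γ ≤ α) (h2 : γ ≤ β) (h3 : 1 ≤ γ) (h4 : 3 < α + β)
    (G : Type*) [Group G] [Fintype G] (a b : G)
    (hcard : Fintype.card G = 2 ^ (α + β))
    (hgen : Subgroup.closure {a, b} = ⊤)
    (hoa : orderOf a = 2 ^ α) (hob : orderOf b = 2 ^ β)
    (hconj : b⁻¹ * a * b = a ^ (1 + 2 ^ (α - γ)))
    (hint : Subgroup.zpowers a ⊓ Subgroup.zpowers b = ⊥) :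
    orderedDavenport G = smallDavenport G + 1 ∧
    smallDavenport G = 2 ^ α + 2 ^ β - 2 ∧
    ProductOneFreeM (Multiset.replicate (2 ^ α - 1) a + Multiset.replicate (2 ^ β - 1) b) :=
  orderedDavenport_eq_smallDavenport_succ_G2_general α β γ h1 h3 G a b hgen hoa hob hconj hint
end

section
/- Let G be a finite 2-group such that the commutator subgroup [G,G] is nontrivial and is contained in the center of G (i.e. [[G,G],G] = 1). Define the Brauer–Jennings–Zassenhaus series of G (for p = 2) by M₁(G) = G and, for i ≥ 2, M_i(G) = [M_{i−1}(G), G] · M_{⌈i/2⌉}(G)², where for a subgroup H, H² denotes the subgroup generated by the squares of elements of H, and [H, G] is the subgroup generated by commutators. Then for every s ≥ 1 and every j with 2^(s−1) + 1 ≤ j ≤ 2^s, one has M_j(G) = G^(2^s), where G^(2^s) is the subgroup of G generated by the 2^s-th powers of elements of G. -/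
/-!
When commutators are central, `g ↦ ⁅g, z⁆` is a homomorphism and
`(a * b) ^ n = a ^ n * b ^ n * ⁅b, a⁆ ^ (n.choose 2)`. For `n = 2k` both
`⁅a, b⁆ ^ (n.choose 2)` and `⁅a, b⁆ ^ n = ⁅a ^ n, b⁆` lie in `G^(2k)`, and
`n.choose 2 + k = n * k`, so `⁅a, b⁆ ^ k ∈ G^(2k)`. Hence `⁅G^k, G⁆ ≤ G^(2k)` and
`(G^k)² = G^(2k)`, and induction on `j` gives `M_j = G^(2 ^ ⌈log₂ j⌉)`, because
`⌈log₂ j⌉ = ⌈log₂ ⌈j/2⌉⌉ + 1` for `j ≥ 2`.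
-/

/-- For a subgroup `H` of `G`, the subgroup `H^n` generated by the `n`-th powers of the
elements of `H`. -/
def powSubgroup {G : Type*} [Group G] (n : ℕ) (H : Subgroup G) : Subgroup G :=
  Subgroup.closure ((fun x => x ^ n) '' (H : Set G))

/-- The Brauer–Jennings–Zassenhaus `M`-series of `G` for `p = 2`:
`M₁(G) = G` and `M_i(G) = [M_{i-1}(G), G] · M_{⌈i/2⌉}(G)²` for `i ≥ 2`. -/
def MSeries (G : Type*) [Group G] : ℕ → Subgroup G
  | 0 => ⊤
  | 1 => ⊤
  | n + 2 => ⁅MSeries G (n + 1), (⊤ : Subgroup G)⁆ ⊔ powSubgroup 2 (MSeries G ((n + 2 + 1) / 2))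
  decreasing_by all_goals omega

open scoped commutatorElement

section powSubgroup

variable {G : Type*} [Group G]

theorem pow_mem_powSubgroup {n : ℕ} {H : Subgroup G} {x : G} (hx : x ∈ H) :
    x ^ n ∈ powSubgroup n H :=
  Subgroup.subset_closure ⟨x, hx, rfl⟩

theorem powSubgroup_le_iff {n : ℕ} {H K : Subgroup G} :
    powSubgroup n H ≤ K ↔ ∀ x ∈ H, x ^ n ∈ K := by
  simp [powSubgroup, Subgroup.closure_le, Set.subset_def]

@[simp]
theorem powSubgroup_one_top : powSubgroup 1 (⊤ : Subgroup G) = ⊤ := by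
  simp [powSubgroup]

theorem powSubgroup_le_of_dvd {m n : ℕ} (h : m ∣ n) (H : Subgroup G) :
    powSubgroup n H ≤ powSubgroup m H := by
  obtain ⟨d, rfl⟩ := h
  refine powSubgroup_le_iff.2 fun x hx => ?_
  rw [pow_mul]
  exact pow_mem (pow_mem_powSubgroup hx) d

theorem commutatorElement_pow_left_mem_powSubgroup (n : ℕ) (x y : G) :
    ⁅x ^ n, y⁆ ∈ powSubgroup n (⊤ : Subgroup G) := by
  have h : ⁅x ^ n, y⁆ = x ^ n * (y * x⁻¹ * y⁻¹) ^ n := by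
    rw [conj_pow, commutatorElement_def, inv_pow]; group
  rw [h]
  exact mul_mem (pow_mem_powSubgroup trivial) (pow_mem_powSubgroup trivial)

end powSubgroup

section ClassTwo

variable {G : Type*} [Group G]

theorem commutatorElement_mul_left_of_central (hc : ∀ a b z : G, Commute ⁅a, b⁆ z)
    (a b z : G) : ⁅a * b, z⁆ = ⁅a, z⁆ * ⁅b, z⁆ := by
  rw [commutatorElement_mul_left_eq_conj_mul, ← (hc b z a).eq, mul_inv_cancel_right,
    (hc b z _).eq]

def commutatorLeftHom (hc : ∀ a b z : G, Commute ⁅a, b⁆ z) (z : G) : G →* G where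
  toFun g := ⁅g, z⁆
  map_one' := by simp
  map_mul' a b := commutatorElement_mul_left_of_central hc a b z

theorem commutatorElement_pow_left_of_central (hc : ∀ a b z : G, Commute ⁅a, b⁆ z) (a z : G)
    (n : ℕ) : ⁅a ^ n, z⁆ = ⁅a, z⁆ ^ n :=
  map_pow (commutatorLeftHom hc z) a n

theorem mul_pow_of_central (hc : ∀ a b z : G, Commute ⁅a, b⁆ z) (a b : G) (n : ℕ) :
    (a * b) ^ n = a ^ n * b ^ n * ⁅b, a⁆ ^ n.choose 2 := by
  induction n with
  | zero => simp
  | succ n ih =>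
    have hswap : b ^ n * a = a * b ^ n * ⁅b, a⁆ ^ n := by
      rw [← commutatorElement_pow_left_of_central hc, ← (hc _ _ _).eq, commutatorElement_def]
      group
    calc (a * b) ^ (n + 1) = a ^ n * (b ^ n * a) * b * ⁅b, a⁆ ^ n.choose 2 := by
          rw [pow_succ, ih, mul_assoc _ _ (a * b), ((hc b a _).pow_left _).eq]; group
      _ = a ^ (n + 1) * b ^ n * (⁅b, a⁆ ^ n * b) * ⁅b, a⁆ ^ n.choose 2 := by
          rw [hswap]; group
      _ = a ^ (n + 1) * b ^ (n + 1) * ⁅b, a⁆ ^ (n + 1).choose 2 := by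
          rw [((hc b a b).pow_left n).eq, Nat.choose_succ_succ, Nat.choose_one_right, pow_add]
          group

theorem commutatorElement_pow_mem_powSubgroup_two_mul (hc : ∀ a b z : G, Commute ⁅a, b⁆ z)
    (a b : G) (k : ℕ) : ⁅a, b⁆ ^ k ∈ powSubgroup (2 * k) (⊤ : Subgroup G) := by
  have hexp : (2 * k).choose 2 + k = 2 * k * k := by
    cases k with
    | zero => rfl
    | succ k =>
      rw [Nat.choose_two_right, mul_assoc, Nat.mul_div_cancel_left _ two_pos, Nat.mul_sub_one,
        Nat.sub_add_cancel (Nat.le_mul_of_pos_right _ (by omega))]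
      ring
  set n := 2 * k
  have hchoose : ⁅a, b⁆ ^ n.choose 2 ∈ powSubgroup n (⊤ : Subgroup G) := by
    have h : ⁅a, b⁆ ^ n.choose 2 = (b ^ n * a ^ n)⁻¹ * (b * a) ^ n := by
      rw [mul_pow_of_central hc]; group
    rw [h]
    exact mul_mem (inv_mem (mul_mem (pow_mem_powSubgroup trivial) (pow_mem_powSubgroup trivial)))
      (pow_mem_powSubgroup trivial)
  have hpow : ⁅a, b⁆ ^ n ∈ powSubgroup n (⊤ : Subgroup G) := by
    rw [← commutatorElement_pow_left_of_central hc]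
    exact commutatorElement_pow_left_mem_powSubgroup n a b
  have h : ⁅a, b⁆ ^ k = (⁅a, b⁆ ^ n.choose 2)⁻¹ * (⁅a, b⁆ ^ n) ^ k := by
    rw [← pow_mul, ← hexp, pow_add, inv_mul_cancel_left]
  rw [h]
  exact mul_mem (inv_mem hchoose) (pow_mem hpow k)

theorem commutator_powSubgroup_top_le (hc : ∀ a b z : G, Commute ⁅a, b⁆ z) (k : ℕ) :
    ⁅powSubgroup k (⊤ : Subgroup G), ⊤⁆ ≤ powSubgroup (2 * k) (⊤ : Subgroup G) := by
  rw [Subgroup.commutator_le]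
  intro g hg z _
  have hmap : (powSubgroup k (⊤ : Subgroup G)).map (commutatorLeftHom hc z) ≤
      powSubgroup (2 * k) (⊤ : Subgroup G) := by
    rw [powSubgroup, MonoidHom.map_closure, Subgroup.closure_le]
    rintro _ ⟨_, ⟨y, -, rfl⟩, rfl⟩
    change ⁅y ^ k, z⁆ ∈ _
    rw [commutatorElement_pow_left_of_central hc]
    exact commutatorElement_pow_mem_powSubgroup_two_mul hc y z k
  exact hmap ⟨g, hg, rfl⟩

theorem powSubgroup_two_powSubgroup_top (hc : ∀ a b z : G, Commute ⁅a, b⁆ z) (k : ℕ) :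
    powSubgroup 2 (powSubgroup k (⊤ : Subgroup G)) = powSubgroup (2 * k) (⊤ : Subgroup G) := by
  refine le_antisymm (powSubgroup_le_iff.2 fun x hx => ?_) (powSubgroup_le_iff.2 fun x _ => ?_)
  · induction hx using Subgroup.closure_induction with
    | mem _ hy =>
      obtain ⟨y, -, rfl⟩ := hy
      rw [← pow_mul']
      exact pow_mem_powSubgroup trivial
    | one => simp
    | mul x y _ hy hx2 hy2 =>
      rw [mul_pow_of_central hc, Nat.choose_self, pow_one]
      exact mul_mem (mul_mem hx2 hy2) (commutator_powSubgroup_top_le hc k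
        (Subgroup.commutator_mem_commutator hy trivial))
    | inv x _ hx2 => simpa using hx2
  · rw [pow_mul']
    exact pow_mem_powSubgroup (pow_mem_powSubgroup trivial)

theorem MSeries_eq_powSubgroup_two_pow_clog (hc : ∀ a b z : G, Commute ⁅a, b⁆ z) :
    ∀ j : ℕ, MSeries G j = powSubgroup (2 ^ Nat.clog 2 j) (⊤ : Subgroup G)
  | 0 => by simp [MSeries]
  | 1 => by simp [MSeries]
  | n + 2 => by
    have hclog : Nat.clog 2 (n + 2) = Nat.clog 2 ((n + 2 + 1) / 2) + 1 :=
      Nat.clog_of_two_le one_lt_two (by omega)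
    have hmono : Nat.clog 2 ((n + 2 + 1) / 2) ≤ Nat.clog 2 (n + 1) :=
      Nat.clog_mono_right 2 (by omega)
    rw [MSeries, MSeries_eq_powSubgroup_two_pow_clog hc (n + 1),
      MSeries_eq_powSubgroup_two_pow_clog hc ((n + 2 + 1) / 2), hclog, pow_succ',
      powSubgroup_two_powSubgroup_top hc]
    refine sup_eq_right.2 (le_trans (Subgroup.commutator_mono ?_ le_rfl)
      (commutator_powSubgroup_top_le hc _))
    exact powSubgroup_le_of_dvd (pow_dvd_pow 2 hmono) ⊤

end ClassTwo

theorem mSeries_eq_powSubgroup_general (G : Type*) [Group G]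
    (h2 : ⁅⁅(⊤ : Subgroup G), (⊤ : Subgroup G)⁆, (⊤ : Subgroup G)⁆ = ⊥) :
    ∀ s : ℕ, 1 ≤ s → ∀ j : ℕ, 2 ^ (s - 1) + 1 ≤ j → j ≤ 2 ^ s →
      MSeries G j = powSubgroup (2 ^ s) (⊤ : Subgroup G) := by
  intro s hs j hlo hhi
  have hc : ∀ a b z : G, Commute ⁅a, b⁆ z := fun a b z => by
    rw [← commutatorElement_eq_one_iff_commute, ← Subgroup.mem_bot, ← h2]
    exact Subgroup.commutator_mem_commutator
      (Subgroup.commutator_mem_commutator trivial trivial) trivial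
  have hclog : Nat.clog 2 j = s := le_antisymm (Nat.clog_le_of_le_pow hhi)
    (by have := (Nat.lt_clog_iff_pow_lt one_lt_two).2 (show 2 ^ (s - 1) < j by omega); omega)
  rw [MSeries_eq_powSubgroup_two_pow_clog hc, hclog]

/-- Let `G` be a finite 2-group with `[G,G] ≠ 1` and `[[G,G],G] = 1`.
Then for every `s ≥ 1` and every `j` with `2^(s-1) + 1 ≤ j ≤ 2^s`, the `j`-th term of the
Brauer–Jennings–Zassenhaus `M`-series of `G` equals `G^(2^s)`. -/
theorem mSeries_eq_powSubgroup (G : Type*) [Group G] [Finite G] (hG : IsPGroup 2 G)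
    (h1 : ⁅(⊤ : Subgroup G), (⊤ : Subgroup G)⁆ ≠ ⊥)
    (h2 : ⁅⁅(⊤ : Subgroup G), (⊤ : Subgroup G)⁆, (⊤ : Subgroup G)⁆ = ⊥) :
    ∀ s : ℕ, 1 ≤ s → ∀ j : ℕ, 2 ^ (s - 1) + 1 ≤ j → j ≤ 2 ^ s →
      MSeries G j = powSubgroup (2 ^ s) (⊤ : Subgroup G) :=
  mSeries_eq_powSubgroup_general G h2
end
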